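/- Let sinc(x) = sin(πx)/(πx) for x ≠ 0 and sinc(0) = 1. Let P > 0, ν > 0 and θ > 0 be real numbers, set β = ⌊1/θ⌋ and α = 1/θ − β, and define g_ℓ = Pν·sinc(ℓ/θ) for ℓ ∈ ℤ. Then the interference power I = (1/(Pν)) · Σ_{ℓ∈ℤ, ℓ≠0} g_ℓ² equals Pν·( θ²·(β² + 2αβ + α) − 1 ). In particular, if 1/θ is a positive integer, then I = 0. -/

import Mathlib

/-! Put `x = 1/θ`. For `ℓ ≠ 0` the terms are `(Pν)² sin²(πℓx)/(πℓx)²`, which are even in `ℓ`,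
and `sin²(πnx)` depends only on the fractional part `α` of `x`. Writing `sin² y = (1 - cos 2y)/2`,
`ζ(2) = π²/6` together with the Fourier series of the Bernoulli polynomial `B₂` on `[0, 1]` gives
`∑_{n ≥ 1} sin²(πnα)/n² = π²(α - α²)/2`. Hence `I = Pν (α - α²)/x²`, which is the claimed
expression because `x = β + α` and `θx = 1`; it vanishes when `α = 0`. -/

open Real

/-- `sinc x = sin(πx)/(πx)` for `x ≠ 0`, and `sinc 0 = 1`. -/
noncomputable def sinc (x : ℝ) : ℝ := if x = 0 then 1 else Real.sin (π * x) / (π * x)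

lemma sinc_eq_real_sinc_pi_mul (x : ℝ) : _root_.sinc x = Real.sinc (π * x) := by
  simp [_root_.sinc, Real.sinc_apply, pi_ne_zero]

lemma hasSum_sin_sq_div_sq_of_mem_Icc {x : ℝ} (hx : x ∈ Set.Icc (0 : ℝ) 1) :
    HasSum (fun n : ℕ => sin (π * n * x) ^ 2 / n ^ 2) (π ^ 2 * (x - x ^ 2) / 2) := by
  have hcos := hasSum_one_div_nat_pow_mul_cos (k := 1) one_ne_zero hx
  rw [mul_one, show (Polynomial.map (algebraMap ℚ ℝ) (Polynomial.bernoulli 2)).eval x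
    = bernoulliFun 2 x from rfl, bernoulliFun_two] at hcos
  have h := ((hasSum_zeta_two.sub hcos).div_const 2).congr_fun
    (g := fun n : ℕ => sin (π * n * x) ^ 2 / n ^ 2) fun n => by
      rw [sin_sq_eq_half_sub, show 2 * (π * n * x) = 2 * π * n * x by ring]
      ring
  have hval : (π ^ 2 / 6 - (-1) ^ (1 + 1) * (2 * π) ^ 2 / 2 / (Nat.factorial 2 : ℝ)
      * (x ^ 2 - x + 6⁻¹)) / 2 = π ^ 2 * (x - x ^ 2) / 2 := by
    norm_num [Nat.factorial]
    ring
  rwa [hval] at h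

lemma sin_sq_pi_mul_int_mul_fract (n : ℤ) (x : ℝ) :
    sin (π * n * Int.fract x) ^ 2 = sin (π * n * x) ^ 2 := by
  have h : 2 * (π * n * x) = 2 * (π * n * Int.fract x) + (n * ⌊x⌋ : ℤ) * (2 * π) := by
    rw [Int.fract]; push_cast; ring
  rw [sin_sq_eq_half_sub, sin_sq_eq_half_sub, h, cos_add_int_mul_two_pi]

lemma hasSum_sin_sq_div_sq (x : ℝ) :
    HasSum (fun n : ℕ => sin (π * n * x) ^ 2 / n ^ 2)
      (π ^ 2 * (Int.fract x - Int.fract x ^ 2) / 2) :=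
  (hasSum_sin_sq_div_sq_of_mem_Icc ⟨Int.fract_nonneg x, (Int.fract_lt_one x).le⟩).congr_fun
    fun n => by simpa using congrArg (· / (n : ℝ) ^ 2) (sin_sq_pi_mul_int_mul_fract n x).symm

lemma HasSum.int_ne_zero_of_add_one_of_neg_add_one {M : Type*} [AddCommMonoid M]
    [TopologicalSpace M] [ContinuousAdd M]
    {f : ℤ → M} {a b : M} (h₁ : HasSum (fun n : ℕ => f (n + 1)) a)
    (h₂ : HasSum (fun n : ℕ => f (-(n + 1))) b) :
    HasSum (fun l : {l : ℤ // l ≠ 0} => f l) (a + b) := by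
  refine (hasSum_subtype_iff_indicator (s := {l : ℤ | l ≠ 0})).mpr ?_
  have h := HasSum.of_add_one_of_neg_add_one (f := Set.indicator {l | l ≠ 0} f)
    (h₁.congr_fun fun n => Set.indicator_of_mem (by simp only [Set.mem_ofPred_eq]; omega) f)
    (h₂.congr_fun fun n => Set.indicator_of_mem (by simp only [Set.mem_ofPred_eq]; omega) f)
  simpa using h

lemma hasSum_sinc_sq_int_mul {x : ℝ} (hx : x ≠ 0) :
    HasSum (fun l : {l : ℤ // l ≠ 0} => _root_.sinc (l * x) ^ 2)
      ((Int.fract x - Int.fract x ^ 2) / x ^ 2) := by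
  have hsucc : HasSum (fun n : ℕ => _root_.sinc ((n + 1 : ℤ) * x) ^ 2)
      ((Int.fract x - Int.fract x ^ 2) / (2 * x ^ 2)) := by
    have h := ((hasSum_nat_add_iff' 1).mpr (hasSum_sin_sq_div_sq x)).div_const (π ^ 2 * x ^ 2)
    have h' := h.congr_fun (g := fun n : ℕ => _root_.sinc ((n + 1 : ℤ) * x) ^ 2) fun n => by
      rw [sinc_eq_real_sinc_pi_mul, Real.sinc_of_ne_zero (by positivity)]
      push_cast
      field_simp
    have hval : (π ^ 2 * (Int.fract x - Int.fract x ^ 2) / 2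
        - ∑ i ∈ Finset.range 1, sin (π * i * x) ^ 2 / (i : ℝ) ^ 2) / (π ^ 2 * x ^ 2)
        = (Int.fract x - Int.fract x ^ 2) / (2 * x ^ 2) := by
      rw [Finset.sum_range_one, Nat.cast_zero, zero_pow two_ne_zero, div_zero, sub_zero]
      field_simp
    rwa [hval] at h'
  have hneg : HasSum (fun n : ℕ => _root_.sinc ((-(n + 1) : ℤ) * x) ^ 2)
      ((Int.fract x - Int.fract x ^ 2) / (2 * x ^ 2)) :=
    hsucc.congr_fun fun n => by
      rw [Int.cast_neg, neg_mul, sinc_eq_real_sinc_pi_mul, sinc_eq_real_sinc_pi_mul, mul_neg,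
        Real.sinc_neg]
  convert HasSum.int_ne_zero_of_add_one_of_neg_add_one
    (f := fun l : ℤ => _root_.sinc (l * x) ^ 2) hsucc hneg using 1
  ring

theorem matched_filter_interference_power_general (P ν θ : ℝ)
    (hθ : 0 < θ) :
    (1 / (P * ν)) * (∑' ℓ : {l : ℤ // l ≠ 0}, (P * ν * _root_.sinc (((ℓ : ℤ) : ℝ) / θ)) ^ 2)
        = P * ν * (θ ^ 2 * ((⌊1 / θ⌋ : ℝ) ^ 2 + 2 * (1 / θ - (⌊1 / θ⌋ : ℝ)) * (⌊1 / θ⌋ : ℝ)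
            + (1 / θ - (⌊1 / θ⌋ : ℝ))) - 1) ∧
      ((∃ n : ℕ, 0 < n ∧ 1 / θ = (n : ℝ)) →
        (1 / (P * ν)) * (∑' ℓ : {l : ℤ // l ≠ 0}, (P * ν * _root_.sinc (((ℓ : ℤ) : ℝ) / θ)) ^ 2) = 0) := by
  have hsum := ((hasSum_sinc_sq_int_mul (one_div_pos.2 hθ).ne').mul_left ((P * ν) ^ 2)).congr_fun
    (g := fun ℓ : {l : ℤ // l ≠ 0} => (P * ν * _root_.sinc (ℓ / θ)) ^ 2)
    fun ℓ => by rw [mul_pow, div_eq_mul_one_div]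
  rw [hsum.tsum_eq, one_div, sq, ← mul_assoc, ← mul_assoc, inv_mul_mul_self]
  refine ⟨?_, ?_⟩
  · rw [Int.fract]
    field_simp
    ring
  · rintro ⟨n, -, hn⟩
    rw [hn, Int.fract_natCast]
    simp

/-- Eq. (20) of the paper: the matched-filter interference power
`I = (1/(Pν))·Σ_{ℓ≠0} g_ℓ²`, with taps `g_ℓ = Pν·sinc(ℓ/θ)`, equals
`Pν·(θ²(β² + 2αβ + α) - 1)` where `β = ⌊1/θ⌋` and `α = 1/θ - β`.
In particular, if `1/θ` is a positive integer then `I = 0`. -/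
theorem matched_filter_interference_power (P ν θ : ℝ)
    (hP : 0 < P) (hν : 0 < ν) (hθ : 0 < θ) :
    (1 / (P * ν)) * (∑' ℓ : {l : ℤ // l ≠ 0}, (P * ν * _root_.sinc (((ℓ : ℤ) : ℝ) / θ)) ^ 2)
        = P * ν * (θ ^ 2 * ((⌊1 / θ⌋ : ℝ) ^ 2 + 2 * (1 / θ - (⌊1 / θ⌋ : ℝ)) * (⌊1 / θ⌋ : ℝ)
            + (1 / θ - (⌊1 / θ⌋ : ℝ))) - 1) ∧
      ((∃ n : ℕ, 0 < n ∧ 1 / θ = (n : ℝ)) →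
        (1 / (P * ν)) * (∑' ℓ : {l : ℤ // l ≠ 0}, (P * ν * _root_.sinc (((ℓ : ℤ) : ℝ) / θ)) ^ 2) = 0) :=
  matched_filter_interference_power_general P ν θ hθ
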